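/- arXiv:2501.11724 — 2 statements merged into one kernel-verified Lean document; each statement's English description precedes it below -/
import Mathlib

section
/- For fixed m ≥ 2, the series ∑_{n ≥ 1} −ln(J(2^m p_n)) diverges, where p_n is the n-th prime and J(2^m p) = (2(m+1) + p(2^{m+1} − 1)) / (2(m+1) + (2^{m+1} − 1)(1 + p)). -/
open Filter

/-- The explicit value `J(2^m p) = (2(m+1) + p(2^{m+1} − 1)) / (2(m+1) + (2^{m+1} − 1)(1 + p))`. -/
noncomputable def Jx (m p : ℕ) : ℝ :=
  (2 * ((m : ℝ) + 1) + (p : ℝ) * (2 ^ (m + 1) - 1)) /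
    (2 * ((m : ℝ) + 1) + (2 ^ (m + 1) - 1) * (1 + (p : ℝ)))

theorem nth_prime_not_summable : ¬ Summable (fun n => (1:ℝ)/(Nat.nth Nat.Prime n)) := by
  have hinf : (setOf Nat.Prime).Infinite := Nat.infinite_setOf_prime
  set e := @Nat.Subtype.orderIsoOfNat (setOf Nat.Prime) hinf.to_subtype with he
  intro h
  apply Nat.Primes.not_summable_one_div
  have h2 := (Equiv.summable_iff e.toEquiv.symm).mpr h
  refine h2.congr fun x => ?_
  show 1 / ((Nat.nth Nat.Prime (e.symm x) : ℕ) : ℝ) = 1 / ((x : ℕ) : ℝ)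
  rw [Nat.nth_apply_eq_orderIsoOfNat hinf]
  exact congrArg (fun n : ℕ => 1 / (n:ℝ)) (congrArg Subtype.val (e.apply_symm_apply x))

lemma Jx_key (m p : ℕ) (hp : p.Prime) :
    ((2:ℝ)^(m+1)-1) / (2*((m:ℝ)+1) + 2*((2:ℝ)^(m+1)-1)) * (1/p)
      ≤ -Real.log (Jx m p) := by
  have hp2 : (2:ℝ) ≤ (p:ℝ) := by exact_mod_cast hp.two_le
  have hc : (0:ℝ) < (2:ℝ)^(m+1) - 1 := by
    have : (2:ℝ) ≤ 2^(m+1) := by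
      calc (2:ℝ) = 2^1 := by norm_num
      _ ≤ 2^(m+1) := by
        apply pow_le_pow_right₀ (by norm_num) (by omega)
    linarith
  set c : ℝ := (2:ℝ)^(m+1) - 1 with hcdef
  set A : ℝ := 2*((m:ℝ)+1) with hAdef
  have hA : (0:ℝ) < A := by positivity
  have hN : (0:ℝ) < A + (p:ℝ) * c := by nlinarith
  have hD : (0:ℝ) < A + c * (1 + (p:ℝ)) := by nlinarith
  have hJ : Jx m p = (A + (p:ℝ)*c) / (A + c*(1+(p:ℝ))) := rfl
  have hlog : Real.log (Jx m p) ≤ Jx m p - 1 :=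
    Real.log_le_sub_one_of_pos (by rw [hJ]; positivity)
  have h1 : c / (A + c*(1+(p:ℝ))) ≤ -Real.log (Jx m p) := by
    have : Jx m p - 1 = -(c / (A + c*(1+(p:ℝ)))) := by
      rw [hJ]; field_simp; ring
    linarith [hlog, this ▸ hlog]
  refine le_trans ?_ h1
  rw [div_mul_div_comm, mul_one, div_le_div_iff₀ (by positivity) hD]
  nlinarith [hc, hA, hp2, mul_le_mul_of_nonneg_left hp2 hc.le, mul_le_mul_of_nonneg_left hp2 hA.le]

/-- For fixed `m ≥ 2`, the series `∑ₙ −ln(J(2^m p_n))` diverges. -/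
theorem neg_log_Jx_not_summable (m : ℕ) (hm : 2 ≤ m) :
    ¬ Summable (fun n => -Real.log (Jx m (Nat.nth Nat.Prime n))) := by
  intro h
  apply nth_prime_not_summable
  have hc : (0:ℝ) < (2:ℝ)^(m+1) - 1 := by
    have : (2:ℝ) ≤ 2^(m+1) := by
      calc (2:ℝ) = 2^1 := by norm_num
      _ ≤ 2^(m+1) := by apply pow_le_pow_right₀ (by norm_num) (by omega)
    linarith
  set K : ℝ := ((2:ℝ)^(m+1)-1) / (2*((m:ℝ)+1) + 2*((2:ℝ)^(m+1)-1)) with hK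
  have hKpos : 0 < K := by
    apply div_pos hc; positivity
  have hsum : Summable (fun n => K * (1 / (Nat.nth Nat.Prime n : ℝ))) := by
    apply h.of_nonneg_of_le (fun n => by positivity)
    intro n
    exact Jx_key m _ (Nat.nth_mem_of_infinite Nat.infinite_setOf_prime n)
  exact (summable_mul_left_iff hKpos.ne').mp hsum
end

section
/- Fix m ≥ 2 and let p_n denote the n-th prime. The set of finite products { ∏_{n ∈ P} J(2^m p_n) : P ⊂ ℕ \ {0} finite }, where J(2^m p) = (2(m+1) + p(2^{m+1} − 1)) / (2(m+1) + (2^{m+1} − 1)(1 + p)), is dense in the interval (0, 1]. -/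
/-!
Write `a j = J(2^m p_j)`. Each `a j` lies in `(0, 1]`; `a j → 1` since `1 - J(2^m p) ≤ 1/(p+1)`,
and `∑ (1 - a j)` diverges since `1 - J(2^m p) ≥ 1/(p + 2m + 3)` and `∑ 1/p` over the primes
diverges. For any such sequence the finite subproducts are dense in `(0, 1]`: given `x` and `ε`,
pick `K` with `x / a j < x + ε` for `j ≥ K`. The products `∏_{K ≤ j < K+n} a j` start at `1`, tend
to `0` and shrink by one factor `a j` at each step, so the last one that is still `≥ x` is `< x + ε`.
-/

open Filter

open Finset Topology

theorem exists_le_and_succ_lt {α : Type*} [LinearOrder α] {u : ℕ → α} {x : α}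
    (h0 : x ≤ u 0) (hlt : ∃ n, u n < x) : ∃ n, x ≤ u n ∧ u (n + 1) < x := by
  by_contra! h
  obtain ⟨n, hn⟩ := hlt
  exact (Nat.rec h0 h n : x ≤ u n).not_gt hn

theorem tendsto_prod_range_zero_of_not_summable {a : ℕ → ℝ} (ha0 : ∀ j, 0 ≤ a j)
    (ha1 : ∀ j, a j ≤ 1) (hdiv : ¬ Summable fun j ↦ 1 - a j) :
    Tendsto (fun n ↦ ∏ j ∈ range n, a j) atTop (𝓝 0) := by
  have hsum : Tendsto (fun n ↦ ∑ j ∈ range n, (1 - a j)) atTop atTop :=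
    (not_summable_iff_tendsto_nat_atTop_of_nonneg fun j ↦ sub_nonneg.2 (ha1 j)).1 hdiv
  have hle : ∀ n, ∏ j ∈ range n, a j ≤ Real.exp (-∑ j ∈ range n, (1 - a j)) := fun n ↦ by
    rw [← sum_neg_distrib, Real.exp_sum]
    exact prod_le_prod (fun j _ ↦ ha0 j) fun j _ ↦ by linarith [Real.add_one_le_exp (-(1 - a j))]
  exact tendsto_of_tendsto_of_tendsto_of_le_of_le tendsto_const_nhds
    (Real.tendsto_exp_neg_atTop_nhds_zero.comp hsum) (fun n ↦ prod_nonneg fun j _ ↦ ha0 j) hle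

theorem Ioc_subset_closure_range_prod {a : ℕ → ℝ} (ha0 : ∀ j, 0 < a j) (ha1 : ∀ j, a j ≤ 1)
    (hlim : Tendsto a atTop (𝓝 1)) (hdiv : ¬ Summable fun j ↦ 1 - a j) :
    Set.Ioc 0 1 ⊆ closure (Set.range fun s : Finset ℕ ↦ ∏ j ∈ s, a j) := by
  rintro x ⟨hx0, hx1⟩
  rw [Metric.mem_closure_iff]
  intro ε hε
  have hquot : Tendsto (fun j ↦ x / a j) atTop (𝓝 x) := by
    simpa [div_eq_mul_inv] using (hlim.inv₀ one_ne_zero).const_mul x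
  obtain ⟨K, hK⟩ := eventually_atTop.1 (hquot.eventually_lt_const (lt_add_of_pos_right x hε))
  set u : ℕ → ℝ := fun n ↦ ∏ j ∈ range n, a (j + K)
  have hu : Tendsto u atTop (𝓝 0) :=
    tendsto_prod_range_zero_of_not_summable (fun j ↦ (ha0 _).le) (fun j ↦ ha1 _)
      ((summable_nat_add_iff K).not.2 hdiv)
  obtain ⟨n, hxn, hnx⟩ := exists_le_and_succ_lt (u := u) (by simpa [u] using hx1)
    (hu.eventually_lt_const hx0).exists
  have hun : u n < x + ε := by
    refine lt_of_lt_of_le ?_ (hK (n + K) (Nat.le_add_left K n)).le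
    rw [lt_div_iff₀ (ha0 _)]
    simpa [u, prod_range_succ] using hnx
  refine ⟨u n, ⟨(range n).map (addRightEmbedding K), by simp [u]⟩, ?_⟩
  rw [Real.dist_eq, abs_sub_comm, abs_of_nonneg (sub_nonneg.2 hxn)]
  linarith

theorem one_sub_Jx (m p : ℕ) :
    1 - Jx m p = (2 ^ (m + 1) - 1) / (2 * ((m : ℝ) + 1) + (2 ^ (m + 1) - 1) * (1 + (p : ℝ))) := by
  have hpow : (1 : ℝ) ≤ 2 ^ (m + 1) := one_le_pow₀ one_le_two
  rw [Jx, one_sub_div (by positivity)]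
  ring

theorem Jx_pos (m p : ℕ) : 0 < Jx m p := by
  have hpow : (1 : ℝ) ≤ 2 ^ (m + 1) := one_le_pow₀ one_le_two
  unfold Jx
  positivity

theorem Jx_le_one (m p : ℕ) : Jx m p ≤ 1 := by
  have hpow : (1 : ℝ) ≤ 2 ^ (m + 1) := one_le_pow₀ one_le_two
  have h : 0 ≤ 1 - Jx m p := by rw [one_sub_Jx]; positivity
  linarith

theorem one_sub_Jx_le (m p : ℕ) : 1 - Jx m p ≤ 1 / ((p : ℝ) + 1) := by
  have hpow : (1 : ℝ) ≤ 2 ^ (m + 1) := one_le_pow₀ one_le_two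
  rw [one_sub_Jx, div_le_div_iff₀ (by positivity) (by positivity)]
  nlinarith

theorem one_div_add_le_one_sub_Jx (m p : ℕ) : 1 / ((p : ℝ) + (2 * m + 3)) ≤ 1 - Jx m p := by
  have hpow : (2 : ℝ) ≤ 2 ^ (m + 1) := le_self_pow₀ one_le_two m.succ_ne_zero
  rw [one_sub_Jx, div_le_div_iff₀ (by positivity) (by nlinarith)]
  nlinarith [mul_nonneg (sub_nonneg.2 hpow) (Nat.cast_nonneg (α := ℝ) m)]

theorem tendsto_Jx_atTop (m : ℕ) : Tendsto (Jx m) atTop (𝓝 1) := by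
  have h : Tendsto (fun p ↦ 1 - Jx m p) atTop (𝓝 0) :=
    tendsto_of_tendsto_of_tendsto_of_le_of_le tendsto_const_nhds
      tendsto_one_div_add_atTop_nhds_zero_nat (fun p ↦ sub_nonneg.2 (Jx_le_one m p))
      (one_sub_Jx_le m)
  simpa using h.const_sub 1

theorem not_summable_one_div_nth_prime : ¬ Summable fun j ↦ 1 / (Nat.nth Nat.Prime j : ℝ) := by
  have h := (Nat.nth_injective Nat.infinite_setOfPred_prime).summable_iff
    (f := Set.indicator {p | p.Prime} fun n : ℕ ↦ (1 : ℝ) / n) fun n hn ↦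
      Set.indicator_of_notMem
        (fun hp ↦ hn (Nat.range_nth_of_infinite Nat.infinite_setOfPred_prime ▸ hp)) _
  rw [← not_iff_not] at h
  simpa [Function.comp_def, Nat.prime_nth_prime] using h.2 not_summable_one_div_on_primes

theorem not_summable_one_div_nth_prime_add {C : ℝ} (hC : 0 ≤ C) :
    ¬ Summable fun j ↦ 1 / ((Nat.nth Nat.Prime j : ℝ) + C) := fun h ↦
  not_summable_one_div_nth_prime <| (h.mul_left (1 + C)).of_nonneg_of_le (fun j ↦ by positivity)
    fun j ↦ by
      have hp : (1 : ℝ) ≤ Nat.nth Nat.Prime j := by exact_mod_cast (Nat.prime_nth_prime j).one_le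
      rw [mul_one_div, div_le_div_iff₀ (by positivity) (by positivity)]
      nlinarith

theorem prod_Jx_dense_general (m : ℕ) :
    ∀ x ∈ Set.Ioc (0 : ℝ) 1,
      x ∈ closure {y : ℝ | ∃ P : Finset ℕ, (∀ n ∈ P, n ≠ 0) ∧
        y = ∏ n ∈ P, Jx m (Nat.nth Nat.Prime (n - 1))} := by
  intro x hx
  have hdiv : ¬ Summable fun j ↦ 1 - Jx m (Nat.nth Nat.Prime j) := fun h ↦
    not_summable_one_div_nth_prime_add (C := 2 * m + 3) (by positivity) <|
      h.of_nonneg_of_le (fun j ↦ by positivity) fun j ↦ one_div_add_le_one_sub_Jx m _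
  refine closure_mono ?_ <| Ioc_subset_closure_range_prod (fun j ↦ Jx_pos m _)
    (fun j ↦ Jx_le_one m _)
    ((tendsto_Jx_atTop m).comp (Nat.nth_strictMono Nat.infinite_setOfPred_prime).tendsto_atTop)
    hdiv hx
  rintro _ ⟨s, rfl⟩
  exact ⟨s.map ⟨Nat.succ, Nat.succ_injective⟩, by simp, by simp⟩

/-- For fixed `m ≥ 2`, the set of finite products `∏_{n ∈ P} J(2^m p_n)` over finite
`P ⊂ ℕ \ {0}` (with `p_n` the `n`-th prime) is dense in `(0, 1]`. -/
theorem prod_Jx_dense (m : ℕ) (hm : 2 ≤ m) :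
    ∀ x ∈ Set.Ioc (0 : ℝ) 1,
      x ∈ closure {y : ℝ | ∃ P : Finset ℕ, (∀ n ∈ P, n ≠ 0) ∧
        y = ∏ n ∈ P, Jx m (Nat.nth Nat.Prime (n - 1))} :=
  prod_Jx_dense_general m
end
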